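/- Let f be a Schur-convex function on probability distributions on k elements, let p be a probability distribution on k elements with non-increasingly ordered entries, and let δ ≥ 0. Then the steepest δ-approximation p̄^(δ) satisfies ‖p − p̄^(δ)‖ ≤ δ and f(q) ≤ f(p̄^(δ)) for every probability distribution q with ‖q − p‖ ≤ δ; that is, the smoothed maximum f̄^(δ)(p) = max_{‖q−p‖≤δ} f(q) is attained and equals f(p̄^(δ)). -/

import Mathlib

open Finset

noncomputable section

/-- The ℓ¹ distance `‖a − b‖ = Σᵢ |aᵢ − bᵢ|` between two vectors in `ℝ^k`. -/
def l1dist {k : ℕ} (a b : Fin k → ℝ) : ℝ := ∑ i, |a i - b i|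

/-- A probability distribution on `k` elements: nonnegative entries summing to 1. -/
def IsProbDist {k : ℕ} (p : Fin k → ℝ) : Prop := (∀ i, 0 ≤ p i) ∧ ∑ i, p i = 1

/-- The vector `a` rearranged in non-increasing order, `a↓`. -/
def descSort {k : ℕ} (a : Fin k → ℝ) : Fin k → ℝ := fun i => a (Tuple.sort a i.rev)

/-- The sum of the first `l` entries of `a` (1-based indexing: entries `1,…,l`). -/
def psum {k : ℕ} (a : Fin k → ℝ) (l : ℕ) : ℝ :=
  ∑ i ∈ univ.filter (fun i : Fin k => (i : ℕ) < l), a i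

/-- The sum of the entries of `a` from position `l` to `k` (1-based indexing). -/
def tailSum {k : ℕ} (a : Fin k → ℝ) (l : ℕ) : ℝ :=
  ∑ i ∈ univ.filter (fun i : Fin k => l ≤ (i : ℕ) + 1), a i

/-- `a` majorizes `b` (`a ≻ b`): the total sums agree and all partial sums of the
non-increasing rearrangements satisfy `Σ_{i=1}^l a↓ᵢ ≥ Σ_{i=1}^l b↓ᵢ` for `l = 1,…,k`. -/
def Majorizes {k : ℕ} (a b : Fin k → ℝ) : Prop :=
  (∑ i, a i = ∑ i, b i) ∧
  ∀ l : ℕ, 1 ≤ l → l ≤ k → psum (descSort b) l ≤ psum (descSort a) l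

/-- The distribution `e₁ = (1,0,…,0)`. -/
def e1 (k : ℕ) : Fin k → ℝ := fun i => if (i : ℕ) = 0 then 1 else 0

/-- The uniform distribution `η = (1/k,…,1/k)`. -/
def unif (k : ℕ) : Fin k → ℝ := fun _ => (k : ℝ)⁻¹

/-- The unnormalised vector `r` in the construction of the steepest approximation:
`r₁ = p₁ + δ/2`, `rᵢ = pᵢ` otherwise. -/
def steepR {k : ℕ} (δ : ℝ) (p : Fin k → ℝ) : Fin k → ℝ :=
  fun i => if (i : ℕ) = 0 then p i + δ / 2 else p i

/-- `lstar ∈ {1,…,k}` is the truncation index of the steepest `δ`-approximation of `p`: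
`Σ_{i=1}^{l*} rᵢ ≤ 1 < Σ_{i=1}^{l*+1} rᵢ` (the second sum being meaningful for `l* < k`). -/
def IsTruncIdx {k : ℕ} (δ : ℝ) (p : Fin k → ℝ) (lstar : ℕ) : Prop :=
  1 ≤ lstar ∧ lstar ≤ k ∧ psum (steepR δ p) lstar ≤ 1 ∧
    (lstar < k → 1 < psum (steepR δ p) (lstar + 1))

/-- `pbar` is the steepest `δ`-approximation `p̄^(δ)` of `p` (assumed non-increasingly
ordered): if `‖p − e₁‖ ≤ δ` then `pbar = e₁`; otherwise `pbar` agrees with `r` on the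
first `l*` entries, has `1 − Σ_{i=1}^{l*} rᵢ` at position `l*+1`, and `0` afterwards. -/
def IsSteepest {k : ℕ} (δ : ℝ) (p pbar : Fin k → ℝ) : Prop :=
  (l1dist p (e1 k) ≤ δ ∧ pbar = e1 k) ∨
  (δ < l1dist p (e1 k) ∧ ∃ lstar : ℕ, IsTruncIdx δ p lstar ∧
    ∀ i : Fin k, pbar i =
      if (i : ℕ) < lstar then steepR δ p i
      else if (i : ℕ) = lstar then 1 - psum (steepR δ p) lstar
      else 0)

/-- `ε(x) = Σ_{i : pᵢ ≥ x} (pᵢ − x)`. -/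
def epsFn {k : ℕ} (p : Fin k → ℝ) (x : ℝ) : ℝ :=
  ∑ i ∈ univ.filter (fun i : Fin k => x ≤ p i), (p i - x)

/-- `γ(y) = Σ_{i : pᵢ ≤ y} (y − pᵢ)`. -/
def gammaFn {k : ℕ} (p : Fin k → ℝ) (y : ℝ) : ℝ :=
  ∑ i ∈ univ.filter (fun i : Fin k => p i ≤ y), (y - p i)

/-- `pflat` is the flattest `δ`-approximation of `p` built from the cutting level `x*` and
the filling level `y*`: `x*, y* ∈ [0,1]`, `ε(x*) = γ(y*) = δ/2`, and `pflat` equals `x*`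
where `pᵢ ≥ x*`, equals `y*` where `pᵢ ≤ y*`, and equals `pᵢ` otherwise. -/
def IsFlattestWith {k : ℕ} (δ : ℝ) (p pflat : Fin k → ℝ) (x y : ℝ) : Prop :=
  x ∈ Set.Icc (0 : ℝ) 1 ∧ y ∈ Set.Icc (0 : ℝ) 1 ∧
  epsFn p x = δ / 2 ∧ gammaFn p y = δ / 2 ∧
  ∀ i : Fin k, pflat i = if x ≤ p i then x else if p i ≤ y then y else p i

/-- `pflat` is the flattest `δ`-approximation `p̲^(δ)` of `p` (assumed non-increasingly
ordered): if `‖p − η‖ ≤ δ` then `pflat = η`; otherwise it is obtained by cutting at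
level `x*` and filling at level `y*`. -/
def IsFlattest {k : ℕ} (δ : ℝ) (p pflat : Fin k → ℝ) : Prop :=
  (l1dist p (unif k) ≤ δ ∧ pflat = unif k) ∨
  (δ < l1dist p (unif k) ∧ ∃ x y : ℝ, IsFlattestWith δ p pflat x y)

end

/-!
If `‖q − p‖ ≤ δ` and both are distributions, the entries of `q` exceed those of `p` by at
most `δ/2` in total; since `p` is sorted, any `l` entries of `q` therefore sum to at most
`min 1 (p₁ + ⋯ + p_l + δ/2)`. The steepest approximation is sorted and its partial sums attain
this bound for every `l`, so it majorizes every such `q`; and it lies within `δ` of `p`, as it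
only moves mass `δ/2` onto the first entry, taken from the tail.
-/

lemma sum_abs_eq_two_mul_sum_posPart {ι : Type*} (s : Finset ι) {d : ι → ℝ}
    (hd : ∑ i ∈ s, d i = 0) : ∑ i ∈ s, |d i| = 2 * ∑ i ∈ s, (d i)⁺ := by
  have h : ∀ i, |d i| = 2 * (d i)⁺ - d i := fun i => by
    linarith [posPart_add_negPart (d i), posPart_sub_negPart (d i)]
  rw [Finset.sum_congr rfl fun i _ => h i, Finset.sum_sub_distrib, ← Finset.mul_sum, hd, sub_zero]

section L1

variable {k : ℕ}

lemma sum_sub_le_half_l1dist {a b : Fin k → ℝ} (hab : ∑ i, a i = ∑ i, b i)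
    (S : Finset (Fin k)) : ∑ i ∈ S, (a i - b i) ≤ l1dist a b / 2 := by
  have h := sum_abs_eq_two_mul_sum_posPart univ (d := fun i => a i - b i)
    (by rw [Finset.sum_sub_distrib, hab, sub_self])
  calc ∑ i ∈ S, (a i - b i) ≤ ∑ i ∈ S, (a i - b i)⁺ := Finset.sum_le_sum fun i _ => le_posPart _
    _ ≤ ∑ i, (a i - b i)⁺ :=
        Finset.sum_le_sum_of_subset_of_nonneg (subset_univ S) fun i _ _ => posPart_nonneg _
    _ = l1dist a b / 2 := by rw [l1dist, h]; ring

lemma l1dist_le_two_mul_sum_sub {a b c : Fin k → ℝ} (hab : ∑ i, a i = ∑ i, b i)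
    (hac : ∀ i, a i ≤ c i) (hbc : ∀ i, b i ≤ c i) : l1dist a b ≤ 2 * ∑ i, (c i - a i) := by
  have h := sum_abs_eq_two_mul_sum_posPart univ (d := fun i => b i - a i)
    (by rw [Finset.sum_sub_distrib, hab, sub_self])
  calc l1dist a b = ∑ i, |b i - a i| := Finset.sum_congr rfl fun i _ => abs_sub_comm _ _
    _ = 2 * ∑ i, (b i - a i)⁺ := h
    _ ≤ 2 * ∑ i, (c i - a i) := by
        gcongr with i
        exact (posPart_def _).trans_le (max_le (by linarith [hbc i]) (by linarith [hac i]))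

end L1

section PartialSums

variable {k : ℕ}

lemma psum_congr {a b : Fin k → ℝ} {l : ℕ} (h : ∀ i : Fin k, (i : ℕ) < l → a i = b i) :
    psum a l = psum b l :=
  Finset.sum_congr rfl fun i hi => h i (Finset.mem_filter.1 hi).2

lemma psum_add (a b : Fin k → ℝ) (l : ℕ) : psum (a + b) l = psum a l + psum b l :=
  Finset.sum_add_distrib

lemma psum_succ (a : Fin k → ℝ) {l : ℕ} (hl : l < k) :
    psum a (l + 1) = psum a l + a ⟨l, hl⟩ := by
  have : univ.filter (fun i : Fin k => (i : ℕ) < l + 1) =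
      insert ⟨l, hl⟩ (univ.filter fun i : Fin k => (i : ℕ) < l) := by
    ext i
    simp only [mem_filter, mem_univ, true_and, mem_insert, Fin.ext_iff]
    omega
  rw [psum, this, Finset.sum_insert (by simp), add_comm, psum]

lemma psum_of_le (a : Fin k → ℝ) {l : ℕ} (hl : k ≤ l) : psum a l = ∑ i, a i := by
  rw [psum, Finset.filter_true_of_mem fun i _ => i.isLt.trans_le hl]

lemma psum_le_sum {a : Fin k → ℝ} (ha : ∀ i, 0 ≤ a i) (l : ℕ) : psum a l ≤ ∑ i, a i :=
  Finset.sum_le_sum_of_subset_of_nonneg (filter_subset _ _) fun i _ _ => ha i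

lemma psum_ite_val_eq_zero (c : ℝ) {l : ℕ} (hl : 1 ≤ l) (hk : 0 < k) :
    psum (fun i : Fin k => if (i : ℕ) = 0 then c else 0) l = c := by
  rw [psum, Finset.sum_eq_single ⟨0, hk⟩]
  · exact if_pos rfl
  · exact fun i _ hi => if_neg fun h => hi (Fin.ext h)
  · exact fun h => absurd (mem_filter.2 ⟨mem_univ (⟨0, hk⟩ : Fin k), hl⟩) h

lemma map_castLEEmb_univ {l : ℕ} (hl : l ≤ k) :
    univ.map (Fin.castLEEmb hl) = univ.filter fun i : Fin k => (i : ℕ) < l := by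
  ext i
  simp only [mem_map, mem_univ, true_and, mem_filter, Fin.coe_castLEEmb]
  exact ⟨fun ⟨j, hj⟩ => hj ▸ j.isLt, fun hi => ⟨⟨i, hi⟩, rfl⟩⟩

lemma sum_le_psum_of_antitone {p : Fin k → ℝ} (hp : Antitone p) {S : Finset (Fin k)} {l : ℕ}
    (hS : S.card = l) : ∑ i ∈ S, p i ≤ psum p l := by
  have hl : l ≤ k := hS ▸ (card_le_univ S).trans_eq (Fintype.card_fin k)
  set e := S.orderEmbOfFin hS
  have he : ∀ j : Fin l, (j : ℕ) ≤ e j := fun j =>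
    calc (j : ℕ) = #(Iio j) := (Fin.card_Iio j).symm
      _ ≤ #(Iio (e j)) := card_le_card_of_injOn e
          (fun x hx => by simpa using e.strictMono (by simpa using hx)) e.injective.injOn
      _ = e j := Fin.card_Iio _
  calc ∑ i ∈ S, p i = ∑ j, p (e j) := by
        rw [← S.map_orderEmbOfFin_univ hS, Finset.sum_map]; rfl
    _ ≤ ∑ j, p (Fin.castLE hl j) := Finset.sum_le_sum fun j _ => hp (he j)
    _ = psum p l := by rw [psum, ← map_castLEEmb_univ hl, Finset.sum_map]; rfl

end PartialSums

section Majorization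

variable {k : ℕ}

lemma descSort_eq_self_of_antitone {a : Fin k → ℝ} (ha : Antitone a) : descSort a = a :=
  Tuple.unique_antitone (σ := Fin.revPerm.trans (Tuple.sort a)) (τ := Equiv.refl _)
    ((Tuple.monotone_sort a).comp_antitone Fin.rev_anti) ha

lemma sum_descSort (a : Fin k → ℝ) : ∑ i, descSort a i = ∑ i, a i :=
  Equiv.sum_comp (Fin.revPerm.trans (Tuple.sort a)) a

lemma exists_card_eq_psum_descSort_eq_sum (a : Fin k → ℝ) {l : ℕ} (hl : l ≤ k) :
    ∃ S : Finset (Fin k), S.card = l ∧ psum (descSort a) l = ∑ i ∈ S, a i :=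
  ⟨(univ.filter fun i : Fin k => (i : ℕ) < l).map (Fin.revPerm.trans (Tuple.sort a)).toEmbedding,
    by rw [card_map, ← map_castLEEmb_univ hl, card_map, card_univ, Fintype.card_fin],
    by rw [Finset.sum_map]; rfl⟩

lemma psum_descSort_le_min {p q : Fin k → ℝ} (hp : IsProbDist p) (hord : Antitone p)
    (hq : IsProbDist q) {δ : ℝ} (hqp : l1dist q p ≤ δ) {l : ℕ} (hl : l ≤ k) :
    psum (descSort q) l ≤ min 1 (psum p l + δ / 2) := by
  refine le_min ?_ ?_
  · calc psum (descSort q) l ≤ ∑ i, descSort q i := psum_le_sum (fun i => hq.1 _) l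
      _ = 1 := (sum_descSort q).trans hq.2
  · obtain ⟨S, hS, hsum⟩ := exists_card_eq_psum_descSort_eq_sum q hl
    have hshift := sum_sub_le_half_l1dist (hq.2.trans hp.2.symm) S
    rw [Finset.sum_sub_distrib] at hshift
    linarith [sum_le_psum_of_antitone hord hS]

lemma majorizes_of_min_le_psum {a p q : Fin k → ℝ} (ha : ∑ i, a i = 1) (hanti : Antitone a)
    (hp : IsProbDist p) (hord : Antitone p) {δ : ℝ}
    (hmax : ∀ l, 1 ≤ l → l ≤ k → min 1 (psum p l + δ / 2) ≤ psum a l)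
    (hq : IsProbDist q) (hqp : l1dist q p ≤ δ) : Majorizes a q := by
  refine ⟨ha.trans hq.2.symm, fun l hl1 hlk => ?_⟩
  rw [descSort_eq_self_of_antitone hanti]
  exact (psum_descSort_le_min hp hord hq hqp hlk).trans (hmax l hl1 hlk)

end Majorization

section Steepest

variable {k : ℕ}

lemma isProbDist_e1 (hk : 0 < k) : IsProbDist (e1 k) :=
  ⟨fun i => by unfold e1; split_ifs <;> norm_num,
    (psum_of_le _ le_rfl).symm.trans (psum_ite_val_eq_zero 1 hk hk)⟩

lemma antitone_e1 : Antitone (e1 k) := fun i j hij => by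
  have : (i : ℕ) ≤ j := hij
  unfold e1; split_ifs <;> first | omega | norm_num

lemma min_le_psum_e1 (p : Fin k → ℝ) (δ : ℝ) {l : ℕ} (hl : 1 ≤ l) (hlk : l ≤ k) :
    min 1 (psum p l + δ / 2) ≤ psum (e1 k) l :=
  (min_le_left _ _).trans_eq (psum_ite_val_eq_zero 1 hl (by omega)).symm

variable {δ : ℝ} {p : Fin k → ℝ}

lemma steepR_eq_add (δ : ℝ) (p : Fin k → ℝ) :
    steepR δ p = p + fun i : Fin k => if (i : ℕ) = 0 then δ / 2 else 0 := by
  funext i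
  simp only [steepR, Pi.add_apply]
  split_ifs <;> ring

lemma psum_steepR {l : ℕ} (hl : 1 ≤ l) (hk : 0 < k) : psum (steepR δ p) l = psum p l + δ / 2 := by
  rw [steepR_eq_add, psum_add, psum_ite_val_eq_zero _ hl hk]

lemma steepR_of_ne_zero {i : Fin k} (hi : (i : ℕ) ≠ 0) : steepR δ p i = p i := if_neg hi

lemma le_steepR (hδ : 0 ≤ δ) (i : Fin k) : p i ≤ steepR δ p i := by
  unfold steepR; split_ifs <;> linarith

lemma antitone_steepR (hδ : 0 ≤ δ) (hord : Antitone p) : Antitone (steepR δ p) := by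
  intro i j hij
  by_cases hj : (j : ℕ) = 0
  · obtain rfl : i = j := Fin.ext (by have : (i : ℕ) ≤ j := hij; omega)
    exact le_rfl
  · rw [steepR_of_ne_zero hj]
    exact (hord hij).trans (le_steepR hδ i)

noncomputable def steepTrunc (δ : ℝ) (p : Fin k → ℝ) (L : ℕ) : Fin k → ℝ := fun i =>
  if (i : ℕ) < L then steepR δ p i else if (i : ℕ) = L then 1 - psum (steepR δ p) L else 0

variable {L : ℕ}

lemma steepTrunc_apply_of_lt {i : Fin k} (hi : (i : ℕ) < L) :
    steepTrunc δ p L i = steepR δ p i := if_pos hi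

lemma steepTrunc_apply_of_gt {i : Fin k} (hi : L < i) : steepTrunc δ p L i = 0 := by
  rw [steepTrunc, if_neg (by omega), if_neg (by omega)]

lemma psum_steepTrunc_of_le {l : ℕ} (hl : l ≤ L) :
    psum (steepTrunc δ p L) l = psum (steepR δ p) l :=
  psum_congr fun _ hi => if_pos (by omega)

lemma psum_steepTrunc_of_lt {l : ℕ} (hLl : L < l) (hlk : l ≤ k) :
    psum (steepTrunc δ p L) l = 1 := by
  induction l, hLl using Nat.le_induction with
  | base =>
    rw [psum_succ _ hlk, psum_steepTrunc_of_le le_rfl, steepTrunc, if_neg (lt_irrefl L),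
      if_pos rfl, add_sub_cancel]
  | succ n hn ih =>
    rw [psum_succ _ hlk, ih (by omega), steepTrunc_apply_of_gt hn, add_zero]

lemma one_sub_psum_steepR_lt (hL : IsTruncIdx δ p L) (hLk : L < k) :
    1 - psum (steepR δ p) L < p ⟨L, hLk⟩ := by
  have h := hL.2.2.2 hLk
  rw [psum_succ _ hLk, steepR_of_ne_zero (show L ≠ 0 by have := hL.1; omega)] at h
  linarith

lemma steepTrunc_le_steepR (hδ : 0 ≤ δ) (hp : IsProbDist p) (hL : IsTruncIdx δ p L)
    (i : Fin k) : steepTrunc δ p L i ≤ steepR δ p i := by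
  unfold steepTrunc
  split_ifs with hlt heq
  · exact le_rfl
  · rw [show i = ⟨L, by omega⟩ from Fin.ext heq]
    exact (one_sub_psum_steepR_lt hL _).le.trans (le_steepR hδ _)
  · exact (hp.1 i).trans (le_steepR hδ i)

lemma isProbDist_steepTrunc (hδ : 0 ≤ δ) (hp : IsProbDist p) (hL : IsTruncIdx δ p L) :
    IsProbDist (steepTrunc δ p L) := by
  obtain ⟨hL1, hLk, hle, -⟩ := hL
  refine ⟨fun i => ?_, ?_⟩
  · unfold steepTrunc
    split_ifs
    · exact (hp.1 i).trans (le_steepR hδ i)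
    · linarith
    · exact le_rfl
  · rw [← psum_of_le _ le_rfl]
    rcases hLk.lt_or_eq with hLk | rfl
    · exact psum_steepTrunc_of_lt hLk le_rfl
    · have h := psum_steepR (δ := δ) (p := p) hL1 (by omega)
      rw [psum_of_le p le_rfl, hp.2] at h
      rw [psum_steepTrunc_of_le le_rfl]
      linarith

lemma antitone_steepTrunc (hδ : 0 ≤ δ) (hp : IsProbDist p) (hord : Antitone p)
    (hL : IsTruncIdx δ p L) : Antitone (steepTrunc δ p L) := by
  intro i j hij
  rcases hij.eq_or_lt with rfl | hlt
  · exact le_rfl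
  by_cases hj : (j : ℕ) ≤ L
  · calc steepTrunc δ p L j ≤ steepR δ p j := steepTrunc_le_steepR hδ hp hL j
      _ ≤ steepR δ p i := antitone_steepR hδ hord hij
      _ = steepTrunc δ p L i := (steepTrunc_apply_of_lt (lt_of_lt_of_le hlt hj)).symm
  · rw [steepTrunc_apply_of_gt (not_le.1 hj)]
    exact (isProbDist_steepTrunc hδ hp hL).1 i

lemma l1dist_steepTrunc_le (hδ : 0 ≤ δ) (hp : IsProbDist p) (hL : IsTruncIdx δ p L) :
    l1dist p (steepTrunc δ p L) ≤ δ := by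
  have hk : 0 < k := by have := hL.1; have := hL.2.1; omega
  have h := l1dist_le_two_mul_sum_sub (hp.2.trans (isProbDist_steepTrunc hδ hp hL).2.symm)
    (le_steepR hδ) (steepTrunc_le_steepR hδ hp hL)
  rw [Finset.sum_sub_distrib, ← psum_of_le _ le_rfl, psum_steepR hk hk, psum_of_le p le_rfl] at h
  linarith

lemma min_le_psum_steepTrunc {l : ℕ} (hl : 1 ≤ l) (hlk : l ≤ k) :
    min 1 (psum p l + δ / 2) ≤ psum (steepTrunc δ p L) l := by
  rcases le_or_gt l L with hlL | hLl
  · rw [psum_steepTrunc_of_le hlL, psum_steepR hl (by omega)]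
    exact min_le_right _ _
  · rw [psum_steepTrunc_of_lt hLl hlk]
    exact min_le_left _ _

end Steepest

/-- for a Schur-convex `f`, the smoothed maximum
`f̄^(δ)(p) = max_{‖q−p‖≤δ} f(q)` is attained at the steepest `δ`-approximation `p̄^(δ)`. -/
theorem schurConvex_smooth_max {k : ℕ} (f : (Fin k → ℝ) → ℝ)
    (hf : ∀ a b : Fin k → ℝ, IsProbDist a → IsProbDist b → Majorizes a b → f b ≤ f a)
    (δ : ℝ) (hδ : 0 ≤ δ)
    (p : Fin k → ℝ) (hp : IsProbDist p) (hord : Antitone p)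
    (pbar : Fin k → ℝ) (hpbar : IsSteepest δ p pbar) :
    IsProbDist pbar ∧ l1dist p pbar ≤ δ ∧
      ∀ q : Fin k → ℝ, IsProbDist q → l1dist q p ≤ δ → f q ≤ f pbar := by
  have hk : 0 < k := Nat.pos_of_ne_zero fun h => by subst h; simpa using hp.2
  obtain ⟨hprob, hanti, hdist, hmax⟩ : IsProbDist pbar ∧ Antitone pbar ∧ l1dist p pbar ≤ δ ∧
      ∀ l, 1 ≤ l → l ≤ k → min 1 (psum p l + δ / 2) ≤ psum pbar l := by
    rcases hpbar with ⟨hle, rfl⟩ | ⟨-, L, hL, hdef⟩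
    · exact ⟨isProbDist_e1 hk, antitone_e1, hle, fun l => min_le_psum_e1 p δ⟩
    · obtain rfl : pbar = steepTrunc δ p L := funext hdef
      exact ⟨isProbDist_steepTrunc hδ hp hL, antitone_steepTrunc hδ hp hord hL,
        l1dist_steepTrunc_le hδ hp hL, fun l => min_le_psum_steepTrunc⟩
  exact ⟨hprob, hdist, fun q hq hqp =>
    hf _ _ hprob hq (majorizes_of_min_le_psum hprob.2 hanti hp hord hmax hq hqp)⟩
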